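/- Fix W1 > 0 and W2 > 0, a state value (S, L1, I, L2, R) ∈ ℝ⁵ and an adjoint value λ = (λ1, λ2, λ3, λ4, λ5) ∈ ℝ⁵. The function (u1, u2) ↦ H(S, L1, I, L2, R, λ, u1, u2) attains its minimum over the square [0,1]² at the point (û1, û2) with û1 = min{ max{0, ε1·I·(λ3 − λ5) / W1}, 1} and û2 = min{ max{0, ε2·L2·(λ4 − λ5) / W2}, 1}, and this minimizer is unique: every (u1, u2) ∈ [0,1]² with H(S, L1, I, L2, R, λ, u1, u2) = H(S, L1, I, L2, R, λ, û1, û2) satisfies (u1, u2) = (û1, û2). -/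

import Mathlib

/-! The Hamiltonian is separable in the controls: up to terms independent of `(u1, u2)` it is
`q₁(u1) + q₂(u2)` with `qᵢ(u) = Wᵢ/2 · u² - aᵢ · u`, `a₁ = ε1·I·(λ3 - λ5)`, `a₂ = ε2·L2·(λ4 - λ5)`.
Each `qᵢ` is strongly convex, and the projection `cᵢ` of its free minimizer `aᵢ / Wᵢ` onto `[0,1]`
satisfies the variational inequality `(Wᵢ cᵢ - aᵢ)(u - cᵢ) ≥ 0` on `[0,1]`. Hence
`qᵢ(u) ≥ qᵢ(cᵢ) + Wᵢ/2 · (u - cᵢ)²`, which gives both minimality and uniqueness. -/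

/-- The Hamiltonian of the TB optimal control problem. -/
noncomputable def tbHam (μ β δ ω ωR σ σR τ0 τ1 τ2 N ε1 ε2 φ W1 W2 : ℝ)
    (S L1 I L2 R : ℝ) (l : Fin 5 → ℝ) (u1 u2 : ℝ) : ℝ :=
  I + L2 + W1 / 2 * u1 ^ 2 + W2 / 2 * u2 ^ 2
    + l 0 * (μ * N - β / N * I * S - μ * S)
    + l 1 * (β / N * I * (S + σ * L2 + σR * R) - (δ + τ1 + μ) * L1)
    + l 2 * (φ * δ * L1 + ω * L2 + ωR * R - (τ0 + ε1 * u1 + μ) * I)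
    + l 3 * ((1 - φ) * δ * L1 - σ * (β / N) * I * L2 - (ω + ε2 * u2 + τ2 + μ) * L2)
    + l 4 * ((τ0 + ε1 * u1) * I + τ1 * L1 + (τ2 + ε2 * u2) * L2
        - σR * (β / N) * I * R - (ωR + μ) * R)

open Set

theorem clamp_variational_ineq {lo hi x u : ℝ} (hu : u ∈ Icc lo hi) :
    0 ≤ (min (max lo x) hi - x) * (u - min (max lo x) hi) := by
  obtain ⟨hlo, hhi⟩ := hu
  rcases le_total x lo with hx | hx
  · rw [max_eq_left hx, min_eq_left (hlo.trans hhi)]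
    exact mul_nonneg (by linarith) (by linarith)
  rcases le_total x hi with hx' | hx'
  · rw [max_eq_right hx, min_eq_left hx', sub_self, zero_mul]
  · rw [max_eq_right hx, min_eq_right hx']
    exact mul_nonneg_of_nonpos_of_nonpos (by linarith) (by linarith)

theorem quadratic_growth_at_clamp {W a lo hi u : ℝ} (hW : 0 < W) (hu : u ∈ Icc lo hi) :
    W / 2 * min (max lo (a / W)) hi ^ 2 - a * min (max lo (a / W)) hi
        + W / 2 * (u - min (max lo (a / W)) hi) ^ 2
      ≤ W / 2 * u ^ 2 - a * u := by
  set c := min (max lo (a / W)) hi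
  have hvar : 0 ≤ W * ((c - a / W) * (u - c)) :=
    mul_nonneg hW.le (clamp_variational_ineq hu)
  have hdiff : W / 2 * u ^ 2 - a * u - (W / 2 * c ^ 2 - a * c + W / 2 * (u - c) ^ 2)
      = W * ((c - a / W) * (u - c)) := by
    field_simp
    ring
  linarith

section

variable (μ β δ ω ωR σ σR τ0 τ1 τ2 N ε1 ε2 φ W1 W2 S L1 I L2 R : ℝ) (l : Fin 5 → ℝ)

theorem tbHam_sub_tbHam (u1 u2 v1 v2 : ℝ) :
    tbHam μ β δ ω ωR σ σR τ0 τ1 τ2 N ε1 ε2 φ W1 W2 S L1 I L2 R l u1 u2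
      - tbHam μ β δ ω ωR σ σR τ0 τ1 τ2 N ε1 ε2 φ W1 W2 S L1 I L2 R l v1 v2
    = (W1 / 2 * u1 ^ 2 - ε1 * I * (l 2 - l 4) * u1)
      - (W1 / 2 * v1 ^ 2 - ε1 * I * (l 2 - l 4) * v1)
      + (W2 / 2 * u2 ^ 2 - ε2 * L2 * (l 3 - l 4) * u2)
      - (W2 / 2 * v2 ^ 2 - ε2 * L2 * (l 3 - l 4) * v2) := by
  unfold tbHam
  ring

theorem tbHam_growth_at_clamp {W1 W2 : ℝ} (hW1 : 0 < W1) (hW2 : 0 < W2)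
    {u1 u2 : ℝ} (hu1 : u1 ∈ Icc (0 : ℝ) 1) (hu2 : u2 ∈ Icc (0 : ℝ) 1) :
    tbHam μ β δ ω ωR σ σR τ0 τ1 τ2 N ε1 ε2 φ W1 W2 S L1 I L2 R l
        (min (max 0 (ε1 * I * (l 2 - l 4) / W1)) 1)
        (min (max 0 (ε2 * L2 * (l 3 - l 4) / W2)) 1)
      + W1 / 2 * (u1 - min (max 0 (ε1 * I * (l 2 - l 4) / W1)) 1) ^ 2
      + W2 / 2 * (u2 - min (max 0 (ε2 * L2 * (l 3 - l 4) / W2)) 1) ^ 2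
      ≤ tbHam μ β δ ω ωR σ σR τ0 τ1 τ2 N ε1 ε2 φ W1 W2 S L1 I L2 R l u1 u2 := by
  have h1 := quadratic_growth_at_clamp (a := ε1 * I * (l 2 - l 4)) hW1 hu1
  have h2 := quadratic_growth_at_clamp (a := ε2 * L2 * (l 3 - l 4)) hW2 hu2
  have hsub := tbHam_sub_tbHam μ β δ ω ωR σ σR τ0 τ1 τ2 N ε1 ε2 φ W1 W2 S L1 I L2 R l u1 u2
    (min (max 0 (ε1 * I * (l 2 - l 4) / W1)) 1) (min (max 0 (ε2 * L2 * (l 3 - l 4) / W2)) 1)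
  linarith

end

theorem tb_hamiltonian_min_general
    (μ β δ ω ωR σ σR τ0 τ1 τ2 N ε1 ε2 φ W1 W2 : ℝ)
    (hW1 : 0 < W1) (hW2 : 0 < W2)
    (S L1 I L2 R : ℝ) (l : Fin 5 → ℝ) :
    (∀ u1 ∈ Set.Icc (0 : ℝ) 1, ∀ u2 ∈ Set.Icc (0 : ℝ) 1,
      tbHam μ β δ ω ωR σ σR τ0 τ1 τ2 N ε1 ε2 φ W1 W2 S L1 I L2 R l
        (min (max 0 (ε1 * I * (l 2 - l 4) / W1)) 1)
        (min (max 0 (ε2 * L2 * (l 3 - l 4) / W2)) 1)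
      ≤ tbHam μ β δ ω ωR σ σR τ0 τ1 τ2 N ε1 ε2 φ W1 W2 S L1 I L2 R l u1 u2) ∧
    (∀ u1 ∈ Set.Icc (0 : ℝ) 1, ∀ u2 ∈ Set.Icc (0 : ℝ) 1,
      tbHam μ β δ ω ωR σ σR τ0 τ1 τ2 N ε1 ε2 φ W1 W2 S L1 I L2 R l u1 u2
        = tbHam μ β δ ω ωR σ σR τ0 τ1 τ2 N ε1 ε2 φ W1 W2 S L1 I L2 R l
            (min (max 0 (ε1 * I * (l 2 - l 4) / W1)) 1)
            (min (max 0 (ε2 * L2 * (l 3 - l 4) / W2)) 1) →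
      u1 = min (max 0 (ε1 * I * (l 2 - l 4) / W1)) 1 ∧
      u2 = min (max 0 (ε2 * L2 * (l 3 - l 4) / W2)) 1) := by
  set c1 := min (max 0 (ε1 * I * (l 2 - l 4) / W1)) 1
  set c2 := min (max 0 (ε2 * L2 * (l 3 - l 4) / W2)) 1
  refine ⟨fun u1 hu1 u2 hu2 => ?_, fun u1 hu1 u2 hu2 heq => ?_⟩
  · have hgrowth := tbHam_growth_at_clamp μ β δ ω ωR σ σR τ0 τ1 τ2 N ε1 ε2 φ S L1 I L2 R l
      hW1 hW2 hu1 hu2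
    have : 0 ≤ W1 / 2 * (u1 - c1) ^ 2 + W2 / 2 * (u2 - c2) ^ 2 := by positivity
    linarith
  · have hgrowth := tbHam_growth_at_clamp μ β δ ω ωR σ σR τ0 τ1 τ2 N ε1 ε2 φ S L1 I L2 R l
      hW1 hW2 hu1 hu2
    have hsq : W1 / 2 * (u1 - c1) ^ 2 + W2 / 2 * (u2 - c2) ^ 2 = 0 :=
      le_antisymm (by linarith) (by positivity)
    obtain ⟨h1, h2⟩ := (add_eq_zero_iff_of_nonneg (by positivity) (by positivity)).mp hsq
    constructor
    · simpa [hW1.ne', sub_eq_zero] using h1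
    · simpa [hW2.ne', sub_eq_zero] using h2

/-- For fixed state and adjoint values, the Hamiltonian,
as a function of the controls, attains its minimum over `[0,1]²` at the point
`(û₁, û₂)` given by the projection formulas, and this minimizer is unique. -/
theorem tb_hamiltonian_min
    (μ β δ ω ωR σ σR τ0 τ1 τ2 N ε1 ε2 φ W1 W2 : ℝ)
    (hμ : 0 < μ) (hβ : 0 < β) (hδ : 0 < δ) (hω : 0 < ω) (hωR : 0 < ωR)
    (hσ : 0 < σ) (hσR : 0 < σR) (hτ0 : 0 < τ0) (hτ1 : 0 < τ1) (hτ2 : 0 < τ2)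
    (hN : 0 < N) (hε1 : 0 < ε1) (hε2 : 0 < ε2) (hφ : φ ∈ Set.Ioo (0 : ℝ) 1)
    (hW1 : 0 < W1) (hW2 : 0 < W2)
    (S L1 I L2 R : ℝ) (l : Fin 5 → ℝ) :
    (∀ u1 ∈ Set.Icc (0 : ℝ) 1, ∀ u2 ∈ Set.Icc (0 : ℝ) 1,
      tbHam μ β δ ω ωR σ σR τ0 τ1 τ2 N ε1 ε2 φ W1 W2 S L1 I L2 R l
        (min (max 0 (ε1 * I * (l 2 - l 4) / W1)) 1)
        (min (max 0 (ε2 * L2 * (l 3 - l 4) / W2)) 1)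
      ≤ tbHam μ β δ ω ωR σ σR τ0 τ1 τ2 N ε1 ε2 φ W1 W2 S L1 I L2 R l u1 u2) ∧
    (∀ u1 ∈ Set.Icc (0 : ℝ) 1, ∀ u2 ∈ Set.Icc (0 : ℝ) 1,
      tbHam μ β δ ω ωR σ σR τ0 τ1 τ2 N ε1 ε2 φ W1 W2 S L1 I L2 R l u1 u2
        = tbHam μ β δ ω ωR σ σR τ0 τ1 τ2 N ε1 ε2 φ W1 W2 S L1 I L2 R l
            (min (max 0 (ε1 * I * (l 2 - l 4) / W1)) 1)
            (min (max 0 (ε2 * L2 * (l 3 - l 4) / W2)) 1) →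
      u1 = min (max 0 (ε1 * I * (l 2 - l 4) / W1)) 1 ∧
      u2 = min (max 0 (ε2 * L2 * (l 3 - l 4) / W2)) 1) :=
  tb_hamiltonian_min_general μ β δ ω ωR σ σR τ0 τ1 τ2 N ε1 ε2 φ W1 W2 hW1 hW2 S L1 I L2 R l
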